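/- Let D ⊂ X be a divisor in a threefold meeting a curve C₀ transversely at a single point p, F_C a pure one-dimensional sheaf supported on D, and V a finite-dimensional vector space. Given an extension class e ∈ Ext¹_X(F_C, V ⊗ O_{C₀}(-1)) corresponding under the adjunction isomorphism to a morphism ψ: F_C → V ⊗ O_p of O_D-modules, the following are equivalent: (a) for every nonzero quotient q: V ↠ V', the pushforward q_*(e) ∈ Ext¹_X(F_C, V' ⊗ O_{C₀}(-1)) is nonzero; (b) ψ is surjective. -/

import Mathlib

open Function

namespace LinearMap

variable {R M N : Type*} [Ring R] [AddCommGroup M] [Module R M] [AddCommGroup N] [Module R N]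

theorem mkQ_comp_eq_zero_iff (f : M →ₗ[R] N) (W : Submodule R N) :
    W.mkQ.comp f = 0 ↔ range f ≤ W := by
  rw [← range_le_ker_iff, Submodule.ker_mkQ]

theorem surjective_iff_forall_ne_top_mkQ_comp_ne_zero (f : M →ₗ[R] N) :
    Surjective f ↔ ∀ W : Submodule R N, W ≠ ⊤ → W.mkQ.comp f ≠ 0 := by
  simp_rw [ne_eq, mkQ_comp_eq_zero_iff, ← range_eq_top]
  exact ⟨fun h W hW hle => hW (top_le_iff.mp (h ▸ hle)),
    fun h => by_contra fun hf => h _ hf le_rfl⟩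

end LinearMap

/-- Model: `M` is the `ℂ`-module of data underlying `F_C` (so that
`Hom_D(F_C, V ⊗ O_p) = Hom_ℂ(M, V)` via the fiber at `p`); nonzero quotients
of `V` are `V ⧸ W` for proper subspaces `W ⊊ V`.  For each subspace `W` the
abelian group `E W` models `Ext¹_X(F_C, (V⧸W) ⊗ O_{C₀}(-1))`, with pushforward
`push W : E ⊥ → E W` along `V ↠ V⧸W`, adjunction isomorphisms
`φ : E ⊥ ≃ Hom(M,V)` and `φW W : E W ≃ Hom(M, V⧸W)`, natural in `W`
(hypothesis `hnat`). -/
theorem stmt_12_general (M V : Type) [AddCommGroup M] [Module ℂ M]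
    [AddCommGroup V] [Module ℂ V]
    (E : Submodule ℂ V → Type) [∀ W, AddCommGroup (E W)]
    (push : ∀ W : Submodule ℂ V, E ⊥ →+ E W)
    (φ : E ⊥ ≃+ (M →ₗ[ℂ] V))
    (φW : ∀ W : Submodule ℂ V, E W ≃+ (M →ₗ[ℂ] V ⧸ W))
    (hnat : ∀ (W : Submodule ℂ V) (e : E ⊥),
      φW W (push W e) = W.mkQ.comp (φ e))
    (e : E ⊥) :
    (∀ W : Submodule ℂ V, W ≠ ⊤ → push W e ≠ 0) ↔ Surjective (φ e) := by
  rw [LinearMap.surjective_iff_forall_ne_top_mkQ_comp_ne_zero]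
  refine forall₂_congr fun W _ => ?_
  rw [← hnat, map_ne_zero_iff _ (φW W).injective]

/-- Let `D ⊂ X` meet the curve `C₀` transversely at a single
point `p`, `F_C` a pure one-dimensional sheaf supported on `D`, `V` a
finite-dimensional vector space, and
`e ∈ Ext¹_X(F_C, V ⊗ O_{C₀}(-1))` an extension class corresponding under the
adjunction isomorphism `φ` to `ψ : F_C → V ⊗ O_p`.  Then
(a) `q_*(e) ≠ 0` for every nonzero quotient `q : V ↠ V'` iff (b) `ψ` is
surjective.

Model: `M` is the `ℂ`-module of data underlying `F_C` (so that
`Hom_D(F_C, V ⊗ O_p) = Hom_ℂ(M, V)` via the fiber at `p`); nonzero quotients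
of `V` are `V ⧸ W` for proper subspaces `W ⊊ V`.  For each subspace `W` the
abelian group `E W` models `Ext¹_X(F_C, (V⧸W) ⊗ O_{C₀}(-1))`, with pushforward
`push W : E ⊥ → E W` along `V ↠ V⧸W`, adjunction isomorphisms
`φ : E ⊥ ≃ Hom(M,V)` and `φW W : E W ≃ Hom(M, V⧸W)`, natural in `W`
(hypothesis `hnat`, from Lemma `extlemma`). -/
theorem stmt_12 (M V : Type) [AddCommGroup M] [Module ℂ M]
    [AddCommGroup V] [Module ℂ V] [FiniteDimensional ℂ V]
    (E : Submodule ℂ V → Type) [∀ W, AddCommGroup (E W)]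
    (push : ∀ W : Submodule ℂ V, E ⊥ →+ E W)
    (φ : E ⊥ ≃+ (M →ₗ[ℂ] V))
    (φW : ∀ W : Submodule ℂ V, E W ≃+ (M →ₗ[ℂ] V ⧸ W))
    (hnat : ∀ (W : Submodule ℂ V) (e : E ⊥),
      φW W (push W e) = W.mkQ.comp (φ e))
    (e : E ⊥) :
    (∀ W : Submodule ℂ V, W ≠ ⊤ → push W e ≠ 0) ↔ Surjective (φ e) :=
  stmt_12_general M V E push φ φW hnat e
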